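/- Let T = (V,E) be an X-tree with a proper T-cherry a,b with common neighbor v, and set U := V − {a,b}. Then a subset L of binom(X,2) is a tight edge-weight lasso for T if and only if |L| = |E|, conditions (U1) ab ∈ L and (U2) L_U is an edge-weight lasso for T_U hold, and at least one of the following holds: (U3-a') L_U is a tight edge-weight lasso for T_U (i.e. |L_U| = |E_U|), or (U3-b') |L_U| = |E_U| + 1 = |L| − 1 and Σ_{x ∈ X(a,L^{ab})} ρ_U(xv) ≠ 0 holds for every non-zero map ρ_U : binom(X_U,2) → ℝ with support contained in L_U satisfying Σ_{xy ∈ L_U} ρ_U(xy)·λ^{T_U}_{xy} = 0. -/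

import Mathlib

/- Common definitions for formalizing results of Dress, Huber & Steel,
   "Lassoing a phylogenetic tree I: Basic properties, shellings, and covers".

   Trees are modelled as simple graphs on an ambient vertex type `U`;
   the vertex set of the tree is the support of the graph (every vertex of a
   tree with at least two vertices has degree >= 1). -/

noncomputable section
open scoped Classical

namespace Lasso

variable {U : Type}

/-- The degree of a vertex. -/
def deg (G : SimpleGraph U) (v : U) : ℕ := (G.neighborSet v).ncard

/-- A leaf is a vertex of degree `1`. -/
def IsLeaf (G : SimpleGraph U) (v : U) : Prop := deg G v = 1

/-- An interior vertex: a non-leaf vertex of the tree. -/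
def Interior (G : SimpleGraph U) (v : U) : Prop := v ∈ G.support ∧ ¬ IsLeaf G v

/-- `G` is an `X`-tree: a finite tree without vertices of degree two whose
    leaf set is exactly `X`. -/
structure IsXTree (X : Set U) (G : SimpleGraph U) : Prop where
  support_finite : G.support.Finite
  support_nonempty : G.support.Nonempty
  connected : ∀ a ∈ G.support, ∀ b ∈ G.support, G.Reachable a b
  acyclic : G.IsAcyclic
  no_deg_two : ∀ v : U, deg G v ≠ 2
  leaves_eq : X = {v : U | IsLeaf G v}

/-- An edge weighting of `G`: nonnegative, and zero away from the edges of `G`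
    (so that it represents an element of `ℝ_{≥0}^E`). -/
structure IsWeighting (G : SimpleGraph U) (ω : Sym2 U → ℝ) : Prop where
  nonneg : ∀ e, 0 ≤ ω e
  zero_off : ∀ e, e ∉ G.edgeSet → ω e = 0

/-- A proper edge weighting: in addition strictly positive on interior edges
    (edges both of whose endpoints are non-leaves). -/
structure IsProperWeighting (G : SimpleGraph U) (ω : Sym2 U → ℝ)
    extends IsWeighting G ω : Prop where
  interior_pos : ∀ e ∈ G.edgeSet, (∀ u ∈ e, ¬ IsLeaf G u) → 0 < ω e

/-- The set `E_T(x|y)` of edges separating `x` from `y`, i.e. the edges lying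
    on every walk from `x` to `y` (in a tree: the edges of the path). -/
def pathEdges (G : SimpleGraph U) (x y : U) : Set (Sym2 U) :=
  {e | e ∈ G.edgeSet ∧ ∀ p : G.Walk x y, e ∈ p.edges}

/-- The induced distance `D_ω(x,y)`. -/
def tdist (G : SimpleGraph U) (ω : Sym2 U → ℝ) (x y : U) : ℝ :=
  ∑ᶠ e ∈ pathEdges G x y, ω e

/-- Path edge set of an unordered pair. -/
def pairPathEdges (G : SimpleGraph U) (c : Sym2 U) : Set (Sym2 U) :=
  {e | e ∈ G.edgeSet ∧ ∀ x y : U, c = s(x, y) → ∀ p : G.Walk x y, e ∈ p.edges}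

/-- `D_ω` on an unordered pair (a cord); `λ^T_c(ω)`. -/
def pdist (G : SimpleGraph U) (ω : Sym2 U → ℝ) (c : Sym2 U) : ℝ :=
  ∑ᶠ e ∈ pairPathEdges G c, ω e

/-- `(G,ω)` and `(G',ω')` are `L`-isometric. -/
def LIso (L : Set (Sym2 U)) (G : SimpleGraph U) (ω : Sym2 U → ℝ)
    (G' : SimpleGraph U) (ω' : Sym2 U → ℝ) : Prop :=
  ∀ x y : U, s(x, y) ∈ L → tdist G ω x y = tdist G' ω' x y

/-- `L` is a set of cords of `X`: 2-element subsets of `X`. -/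
def IsCordSet (X : Set U) (L : Set (Sym2 U)) : Prop :=
  ∀ c ∈ L, ¬ c.IsDiag ∧ ∀ u ∈ c, u ∈ X

/-- The union of all cords in `L`. -/
def cup (L : Set (Sym2 U)) : Set U := {v | ∃ c ∈ L, v ∈ c}

/-- `L` is an edge-weight lasso for `G`. -/
def EdgeWeightLasso (G : SimpleGraph U) (L : Set (Sym2 U)) : Prop :=
  ∀ ω ω' : Sym2 U → ℝ, IsProperWeighting G ω → IsProperWeighting G ω' →
    LIso L G ω G ω' → ω = ω'

/-- `G ≃ G'` via a graph isomorphism fixing `X` pointwise. -/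
def FixingIso (X : Set U) (G G' : SimpleGraph U) : Prop :=
  ∃ φ : G ≃g G', ∀ x ∈ X, φ x = x

/-- `(G,ω)` and `(G',ω')` are isometric: a graph isomorphism fixing `X`
    pointwise and preserving edge weights. -/
def FixingIsometry (X : Set U) (G G' : SimpleGraph U) (ω ω' : Sym2 U → ℝ) : Prop :=
  ∃ φ : G ≃g G', (∀ x ∈ X, φ x = x) ∧
    ∀ e ∈ G.edgeSet, ω' (Sym2.map (fun u => φ u) e) = ω e

/-- `L` is a topological lasso for the `X`-tree `G`. -/
def TopologicalLasso (X : Set U) (G : SimpleGraph U) (L : Set (Sym2 U)) : Prop :=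
  ∀ G' : SimpleGraph U, IsXTree X G' →
    ∀ ω ω' : Sym2 U → ℝ, IsProperWeighting G ω → IsProperWeighting G' ω' →
      LIso L G ω G' ω' → FixingIso X G G'

/-- `L` is a strong lasso for the `X`-tree `G`. -/
def StrongLasso (X : Set U) (G : SimpleGraph U) (L : Set (Sym2 U)) : Prop :=
  ∀ G' : SimpleGraph U, IsXTree X G' →
    ∀ ω ω' : Sym2 U → ℝ, IsProperWeighting G ω → IsProperWeighting G' ω' →
      LIso L G ω G' ω' → FixingIsometry X G G' ω ω'

/-- `G` displays the quartet `a a' ‖ b b'`: some edge lies on all four paths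
    joining `a` or `a'` to `b` or `b'`. -/
def DisplaysQ (G : SimpleGraph U) (a a' b b' : U) : Prop :=
  ∃ e : Sym2 U, e ∈ pathEdges G a b ∧ e ∈ pathEdges G a b' ∧
    e ∈ pathEdges G a' b ∧ e ∈ pathEdges G a' b'

def Distinct4 (a b c d : U) : Prop :=
  a ≠ b ∧ a ≠ c ∧ a ≠ d ∧ b ≠ c ∧ b ≠ d ∧ c ≠ d

/-- `a a' ‖ b b' ∈ Q(G)`: a quartet on four distinct elements of `X`
    displayed by `G`. -/
def QuartetOf (X : Set U) (G : SimpleGraph U) (a a' b b' : U) : Prop :=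
  a ∈ X ∧ a' ∈ X ∧ b ∈ X ∧ b' ∈ X ∧ Distinct4 a a' b b' ∧ DisplaysQ G a a' b b'

/-- `G` displays `a a' | b b'`: it displays neither `a b ‖ a' b'` nor
    `a b' ‖ a' b`. -/
def DisplaysBar (G : SimpleGraph U) (a a' b b' : U) : Prop :=
  ¬ DisplaysQ G a b a' b' ∧ ¬ DisplaysQ G a b' a' b

/-- `A, B` is a virtual `T`-split of `X`. -/
def VirtualSplit (X : Set U) (G : SimpleGraph U) (A B : Set U) : Prop :=
  A.Nonempty ∧ B.Nonempty ∧ Disjoint A B ∧ A ∪ B = X ∧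
    ∀ a ∈ A, ∀ a' ∈ A, ∀ b ∈ B, ∀ b' ∈ B, a ≠ a' → b ≠ b' → DisplaysBar G a a' b b'

/-- `G ≤ G'` (`G'` refines `G`), via the standard characterization
    `Q(T) ⊆ Q(T')` of refinement of `X`-trees. -/
def Refines (X : Set U) (G G' : SimpleGraph U) : Prop :=
  ∀ a a' b b' : U, QuartetOf X G a a' b b' → QuartetOf X G' a a' b b'

/-- `L` is a weak lasso for (coralls) the `X`-tree `G`. -/
def WeakLasso (X : Set U) (G : SimpleGraph U) (L : Set (Sym2 U)) : Prop :=
  ∀ G' : SimpleGraph U, IsXTree X G' →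
    ∀ ω ω' : Sym2 U → ℝ, IsProperWeighting G ω → IsProperWeighting G' ω' →
      LIso L G ω G' ω' → Refines X G G'

/-- The subgraph induced on a vertex set `A`. -/
def restrict {α : Type*} (Γ : SimpleGraph α) (A : Set α) : SimpleGraph α where
  Adj u v := Γ.Adj u v ∧ u ∈ A ∧ v ∈ A
  symm := ⟨by rintro u v ⟨h, hu, hv⟩; exact ⟨h.symm, hv, hu⟩⟩
  loopless := ⟨by rintro v ⟨h, _, _⟩; exact h.ne rfl⟩

/-- The restriction of `Γ` to `A` is a connected graph. -/
def ConnectedOn {α : Type*} (Γ : SimpleGraph α) (A : Set α) : Prop :=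
  ∀ x ∈ A, ∀ y ∈ A, (restrict Γ A).Reachable x y

/-- The connected component of `x` in `Γ` is bipartite. -/
def ComponentBipartite {α : Type*} (Γ : SimpleGraph α) (x : α) : Prop :=
  ∃ f : α → Bool, ∀ u v : α, Γ.Reachable x u → Γ.Adj u v → f u ≠ f v

/-- No connected component (of the graph with vertex set `S`) is bipartite. -/
def StronglyNonBipartite {α : Type*} (Γ : SimpleGraph α) (S : Set α) : Prop :=
  ∀ x ∈ S, ¬ ComponentBipartite Γ x

/-- The graph `Γ` is bipartite. -/
def Bipartite {α : Type*} (Γ : SimpleGraph α) : Prop :=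
  ∃ f : α → Bool, ∀ u v : α, Γ.Adj u v → f u ≠ f v

/-- `E_v`: the set of edges of `G` containing `v`. -/
def Ev (G : SimpleGraph U) (v : U) : Set (Sym2 U) := {e | e ∈ G.edgeSet ∧ v ∈ e}

/-- The graph `G(L,v)` on the edge set `E_v`: two distinct edges at `v` are
    adjacent if some cord of `L` has both on its path. -/
def covGraph (G : SimpleGraph U) (L : Set (Sym2 U)) (v : U) : SimpleGraph (Sym2 U) where
  Adj e e' := e ≠ e' ∧ e ∈ Ev G v ∧ e' ∈ Ev G v ∧
    ∃ x y : U, s(x, y) ∈ L ∧ e ∈ pathEdges G x y ∧ e' ∈ pathEdges G x y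
  symm := ⟨by
    rintro e e' ⟨hne, he, he', x, y, hc, hp, hp'⟩
    exact ⟨hne.symm, he', he, x, y, hc, hp', hp⟩⟩
  loopless := ⟨by rintro e ⟨hne, _⟩; exact hne rfl⟩

/-- `G(L,v)` is the complete graph on `E_v`. -/
def CompleteAt (G : SimpleGraph U) (L : Set (Sym2 U)) (v : U) : Prop :=
  ∀ e ∈ Ev G v, ∀ e' ∈ Ev G v, e ≠ e' → (covGraph G L v).Adj e e'

/-- `L` is a `t`-cover of `G`. -/
def TCover (X : Set U) (G : SimpleGraph U) (L : Set (Sym2 U)) : Prop :=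
  cup L = X ∧ ∀ v : U, Interior G v → CompleteAt G L v

/-- The graph `Γ(L, c)` for the cord `c = x x'`, with vertex set `X − {x,x'}`
    and edge set `L^(c)`. -/
def cordGraphC (X : Set U) (G : SimpleGraph U) (L : Set (Sym2 U)) (x x' : U) :
    SimpleGraph U where
  Adj y y' := y ≠ y' ∧ y ≠ x ∧ y ≠ x' ∧ y' ≠ x ∧ y' ≠ x' ∧
    s(y, y') ∈ L ∧ QuartetOf X G x x' y y' ∧
    ((s(x, y) ∈ L ∧ s(x', y') ∈ L) ∨ (s(x, y') ∈ L ∧ s(x', y) ∈ L))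
  symm := ⟨by
    rintro y y' ⟨hne, h1, h2, h3, h4, hL,
      ⟨hx1, hx2, hy1, hy2, ⟨d1, d2, d3, d4, d5, d6⟩, e, p1, p2, p3, p4⟩, hor⟩
    exact ⟨hne.symm, h3, h4, h1, h2, by rwa [Sym2.eq_swap],
      ⟨hx1, hx2, hy2, hy1, ⟨d1, d3, d2, d5, d4, d6.symm⟩, e, p2, p1, p4, p3⟩, hor.symm⟩⟩
  loopless := ⟨by rintro y ⟨hne, _⟩; exact hne rfl⟩

/-- `v` lies on the path of `G` from `x` to `y`. -/
def OnPath (G : SimpleGraph U) (x y v : U) : Prop :=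
  v = x ∨ v = y ∨ ∃ e ∈ pathEdges G x y, v ∈ e

/-- `v = med_G(a,b,c)`: `v` lies on all three pairwise paths. -/
def IsMedian (G : SimpleGraph U) (a b c v : U) : Prop :=
  OnPath G a b v ∧ OnPath G a c v ∧ OnPath G b c v

/-- `L` is a triplet cover of `G`. -/
def TripletCover (X : Set U) (G : SimpleGraph U) (L : Set (Sym2 U)) : Prop :=
  ∀ v : U, Interior G v → ∃ a b c : U, a ∈ X ∧ b ∈ X ∧ c ∈ X ∧
    a ≠ b ∧ a ≠ c ∧ b ≠ c ∧
    s(a, b) ∈ L ∧ s(a, c) ∈ L ∧ s(b, c) ∈ L ∧ IsMedian G a b c v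

/-- `L` is a pointed `x`-cover of `G`. -/
def PointedCover (X : Set U) (G : SimpleGraph U) (L : Set (Sym2 U)) (x : U) : Prop :=
  cup L = X ∧ (∀ v : U, Interior G v → CompleteAt G L v) ∧
    ∀ v : U, Interior G v → ∃ a b : U, a ≠ b ∧
      s(a, x) ∈ L ∧ s(b, x) ∈ L ∧ IsMedian G a b x v

/-- Every interior vertex has degree `3`. -/
def IsBinary (G : SimpleGraph U) : Prop := ∀ v : U, Interior G v → deg G v = 3

/-- `a, b` form a `T`-cherry with common neighbour `v`. -/
def IsCherry (G : SimpleGraph U) (a b v : U) : Prop :=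
  a ≠ b ∧ IsLeaf G a ∧ IsLeaf G b ∧ G.Adj a v ∧ G.Adj b v

/-- `a, b` form a proper `T`-cherry with common neighbour `v` of degree `3`. -/
def IsProperCherry (G : SimpleGraph U) (a b v : U) : Prop :=
  IsCherry G a b v ∧ deg G v = 3

/-- `W` is a `T`-core of `G`. -/
def IsCore (G : SimpleGraph U) (W : Set U) : Prop :=
  W.Nonempty ∧ W ⊆ G.support ∧
    (∀ a ∈ W, ∀ b ∈ W, (restrict G W).Reachable a b) ∧
    ∀ v ∈ W, deg (restrict G W) v = 1 ∨ deg (restrict G W) v = deg G v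

/-- `X_W`: the leaf set of the induced tree `T_W`. -/
def coreLeaves (G : SimpleGraph U) (W : Set U) : Set U :=
  {v | v ∈ W ∧ deg (restrict G W) v = 1}

/-- `g` is the gate of `x` in `W`: the vertex of `W` closest to `x`. -/
def IsGate (G : SimpleGraph U) (W : Set U) (x g : U) : Prop :=
  g ∈ W ∧ ∀ w ∈ W, OnPath G x w g

/-- `L_W`: the cords induced on the gates. -/
def gateCords (G : SimpleGraph U) (W : Set U) (L : Set (Sym2 U)) : Set (Sym2 U) :=
  {c | ∃ p q y y' : U, s(p, q) ∈ L ∧ IsGate G W p y ∧ IsGate G W q y' ∧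
       y ≠ y' ∧ c = s(y, y')}

/-- The gate map of the cherry reduction: `a, b ↦ v`, all else fixed. -/
def cherryMap (a b v : U) : U → U := fun p => if p = a ∨ p = b then v else p

/-- `L_U` for the cherry reduction at the proper cherry `a,b` with neighbour `v`. -/
def cherryLU (L : Set (Sym2 U)) (a b v : U) : Set (Sym2 U) :=
  {c | ∃ p q : U, s(p, q) ∈ L ∧ cherryMap a b v p ≠ cherryMap a b v q ∧
       c = s(cherryMap a b v p, cherryMap a b v q)}

/-- `X(a, L^{ab}) = {y : ay ∈ L − {ab}}`. -/
def sideSet (L : Set (Sym2 U)) (a b : U) : Set U :=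
  {y | s(a, y) ∈ L ∧ s(a, y) ≠ s(a, b)}

/-- `Σ_{c ∈ LU} ρ(c)·λ^{TU}_c = 0` as a linear form on `ℝ^{E_U}`. -/
def RhoAnnihilates (TU : SimpleGraph U) (LU : Set (Sym2 U)) (ρ : Sym2 U → ℝ) : Prop :=
  ∀ η : Sym2 U → ℝ, (∀ e, e ∉ TU.edgeSet → η e = 0) →
    ∑ᶠ c ∈ LU, ρ c * pdist TU η c = 0

/-- `D_ω(ab|cd)`. -/
def Dq (G : SimpleGraph U) (ω : Sym2 U → ℝ) (a b c d : U) : ℝ :=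
  max (tdist G ω a c + tdist G ω b d) (tdist G ω a d + tdist G ω b c)
    - tdist G ω a b - tdist G ω c d

/-- The star tree on `X` with central vertex `z`. -/
def starGraph (X : Set U) (z : U) : SimpleGraph U :=
  SimpleGraph.fromEdgeSet {c | ∃ x ∈ X, c = s(x, z)}

/-- `A ∨ B`: all cords with one end in `A` and the other in `B`. -/
def vee (A B : Set U) : Set (Sym2 U) := {c | ∃ a ∈ A, ∃ b ∈ B, c = s(a, b)}

/-- A `T`-shelling of `binom(X,2) − L` with cords `aᵢbᵢ` and pivots `pᵢ, qᵢ`. -/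
def IsShelling (X : Set U) (G : SimpleGraph U) (L : Set (Sym2 U)) (m : ℕ)
    (a b p q : Fin m → U) : Prop :=
  (∀ i, a i ∈ X ∧ b i ∈ X ∧ a i ≠ b i ∧ s(a i, b i) ∉ L) ∧
  Function.Injective (fun i => s(a i, b i)) ∧
  (∀ x y : U, x ∈ X → y ∈ X → x ≠ y → s(x, y) ∉ L → ∃ i, s(x, y) = s(a i, b i)) ∧
  ∀ i : Fin m,
    p i ∈ X ∧ q i ∈ X ∧ p i ≠ q i ∧
    p i ≠ a i ∧ p i ≠ b i ∧ q i ≠ a i ∧ q i ≠ b i ∧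
    DisplaysQ G (a i) (p i) (b i) (q i) ∧
    ∀ u w : U, u ∈ ({a i, b i, p i, q i} : Set U) → w ∈ ({a i, b i, p i, q i} : Set U) →
      u ≠ w → s(u, w) ≠ s(a i, b i) →
      (s(u, w) ∈ L ∨ ∃ j : Fin m, j < i ∧ s(u, w) = s(a j, b j))

/-- `L` is an `s`-lasso for `G`. -/
def SLasso (X : Set U) (G : SimpleGraph U) (L : Set (Sym2 U)) : Prop :=
  cup L = X ∧ ∃ (m : ℕ) (a b p q : Fin m → U), IsShelling X G L m a b p q

/-- `L'_{A,B}` of Corollary 3 (the cherry construction). -/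
def LAB (L' : Set (Sym2 U)) (X : Set U) (a b : U) (A B : Set U) : Set (Sym2 U) :=
  {c | c ∈ L' ∧ ∀ u ∈ c, u ∈ X ∧ u ≠ a ∧ u ≠ b} ∪
  {c | ∃ x ∈ A ∪ {b}, c = s(a, x)} ∪
  {c | ∃ x ∈ B, c = s(b, x)}

end Lasso

/-!
Edge weightings are recovered from cord lengths exactly when the linear map `λ_L : ℝ^E → ℝ^L`
is injective, so a tight lasso is one for which `λ_L` is bijective. With `E = E_U ⊔ {av, bv}`,
`A = X(a, L^{ab})`, `B = X(b, L^{ab})` and `I` the cords avoiding `a, b`, a vector `δ ∈ ℝ^E` lies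
in `ker λ_L` iff `δ(av) + δ(bv) = 0` (when `ab ∈ L`), `λ^{T_U}_{xv}(δ) = -δ(av)` on `A`,
`λ^{T_U}_{xv}(δ) = -δ(bv)` on `B`, and `λ^{T_U}_c(δ) = 0` on `I`. This gives (U1) (otherwise
`1_{av} + 1_{bv} - 1_{vw}` is in the kernel) and (U2). Counting, `|L| = |L_U| + 1 + |A ∩ B|` and
`|E| = |E_U| + 2`, so for tight `L` either `A ∩ B` is a single leaf, which forces `δ(av) = 0`, or
`A ∩ B = ∅` and `|L_U| = |E_U| + 1`. In the latter case `range λ_{L_U}` is the kernel of any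
nonzero relation `ρ`, and `ρ` evaluated on `λ_{L_U}(δ)` is `-2 δ(av) ∑_{x ∈ A} ρ(xv)`: this is
where (U3-b') enters, in both directions.
-/

namespace Lasso

variable {U : Type}

lemma _root_.Set.Finite.sym2 {α : Type*} {s : Set α} (hs : s.Finite) : s.sym2.Finite :=
  Set.sym2_eq_mk_image ▸ (hs.prod hs).image _

section Paths

variable {G H : SimpleGraph U} {x y z z' : U}

lemma pathEdges_comm (x y : U) : pathEdges G x y = pathEdges G y x := by
  ext e
  refine ⟨fun ⟨he, h⟩ => ⟨he, fun p => ?_⟩, fun ⟨he, h⟩ => ⟨he, fun p => ?_⟩⟩ <;>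
    simpa using h p.reverse

lemma pairPathEdges_mk (x y : U) : pairPathEdges G s(x, y) = pathEdges G x y := by
  ext e
  refine ⟨fun ⟨he, h⟩ => ⟨he, h x y rfl⟩, fun ⟨he, h⟩ => ⟨he, fun x' y' hxy => ?_⟩⟩
  rcases Sym2.eq_iff.mp hxy with ⟨rfl, rfl⟩ | ⟨rfl, rfl⟩
  · exact h
  · exact fun p => by simpa using h p.reverse

lemma pdist_mk (ω : Sym2 U → ℝ) (x y : U) : pdist G ω s(x, y) = tdist G ω x y := by
  rw [pdist, tdist, pairPathEdges_mk]

lemma pairPathEdges_subset (c : Sym2 U) : pairPathEdges G c ⊆ G.edgeSet := fun _ he => he.1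

lemma pathEdges_self (x : U) : pathEdges G x x = ∅ :=
  Set.eq_empty_of_forall_notMem fun _ he => by simpa using he.2 .nil

lemma pathEdges_eq_edges (hG : G.IsAcyclic) {p : G.Walk x y} (hp : p.IsPath) :
    pathEdges G x y = {e | e ∈ p.edges} := by
  ext e
  refine ⟨fun he => he.2 p, fun he => ⟨p.edges_subset_edgeSet he, fun q => ?_⟩⟩
  have : (⟨p, hp⟩ : G.Path x y) = ⟨q.bypass, q.bypass_isPath⟩ :=
    (hG.subsingleton_path x y).elim _ _
  exact q.edges_bypass_subset_edges
    (by simpa [congrArg (fun r : G.Path x y => r.1.edges) this] using he)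

lemma pathEdges_of_le (hle : H ≤ G) (hG : G.IsAcyclic) (hxy : H.Reachable x y) :
    pathEdges H x y = pathEdges G x y := by
  obtain ⟨p, hp⟩ := hxy.exists_isPath
  have hedges : ∀ e ∈ p.edges, e ∈ G.edgeSet := fun e he =>
    SimpleGraph.edgeSet_mono hle (p.edges_subset_edgeSet he)
  rw [pathEdges_eq_edges (hG.anti hle) hp, pathEdges_eq_edges hG (hp.transfer hedges),
    SimpleGraph.Walk.edges_transfer]

lemma pathEdges_eq_insert (hG : G.IsAcyclic) (hx : G.neighborSet x = {z}) (hxy : x ≠ y)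
    (hr : G.Reachable x y) : pathEdges G x y = insert s(x, z) (pathEdges G z y) := by
  obtain ⟨p, hp⟩ := hr.exists_isPath
  cases p with
  | nil => exact absurd rfl hxy
  | @cons _ u _ hxu q =>
    obtain rfl : u = z := by simpa [hx] using (show u ∈ G.neighborSet x from hxu)
    rw [pathEdges_eq_edges hG hp, pathEdges_eq_edges hG hp.of_cons]
    ext e
    simp

lemma notMem_support_of_neighborSet_eq_singleton (hz : G.neighborSet z = {z'}) {x y : U}
    (p : G.Walk x y) (hp : p.IsPath) (hx : x ≠ z) (hy : y ≠ z) : z ∉ p.support := by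
  induction p with
  | nil => simpa using hx.symm
  | @cons x u y hxu q ih =>
    rw [SimpleGraph.Walk.cons_isPath_iff] at hp
    rw [SimpleGraph.Walk.support_cons, List.mem_cons, not_or]
    refine ⟨hx.symm, fun hzq => ?_⟩
    obtain rfl | hu := eq_or_ne u z
    · -- the path would enter and leave `z` through its only neighbour `z' = x`
      obtain rfl : x = z' := by simpa [hz] using (show x ∈ G.neighborSet u from hxu.symm)
      cases q with
      | nil => exact hy rfl
      | @cons _ u' _ huu' q' =>
        obtain rfl : u' = x := by simpa [hz] using (show u' ∈ G.neighborSet u from huu')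
        exact hp.2 (by simp)
    · exact ih hp.1 hu hy hzq

lemma notMem_of_mem_pathEdges (hG : G.IsAcyclic) (hz : G.neighborSet z = {z'})
    (hr : G.Reachable x y) (hx : x ≠ z) (hy : y ≠ z) {e : Sym2 U} (he : e ∈ pathEdges G x y) :
    z ∉ e := by
  obtain ⟨p, hp⟩ := hr.exists_isPath
  rw [pathEdges_eq_edges hG hp] at he
  exact fun hze => notMem_support_of_neighborSet_eq_singleton hz p hp hx hy
    (p.mem_support_of_mem_edges he hze)

lemma eq_mk_of_neighborSet_eq_singleton (hz : G.neighborSet z = {z'}) {e : Sym2 U}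
    (he : e ∈ G.edgeSet) (hze : z ∈ e) : e = s(z, z') := by
  rw [← Sym2.other_spec hze] at he ⊢
  have : Sym2.Mem.other hze ∈ G.neighborSet z := he
  rw [hz, Set.mem_singleton_iff] at this
  rw [this]

lemma restrict_le (S : Set U) : restrict G S ≤ G := fun _ _ h => h.1

lemma mem_edgeSet_restrict_sdiff {Z : Set U} {e : Sym2 U} :
    e ∈ (restrict G (G.support \ Z)).edgeSet ↔ e ∈ G.edgeSet ∧ ∀ u ∈ e, u ∉ Z := by
  induction e using Sym2.ind with
  | _ u u' =>
    have hu : G.Adj u u' → u ∈ G.support ∧ u' ∈ G.support := fun h => ⟨⟨u', h⟩, ⟨u, h.symm⟩⟩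
    simp only [SimpleGraph.mem_edgeSet, restrict, Set.mem_sdiff, Sym2.mem_iff, forall_eq_or_imp,
      forall_eq]
    tauto

lemma reachable_restrict_sdiff {Z : Set U} (hZ : ∀ z ∈ Z, ∃ z', G.neighborSet z = {z'})
    (hr : G.Reachable x y) (hx : x ∉ Z) (hy : y ∉ Z) :
    (restrict G (G.support \ Z)).Reachable x y := by
  obtain ⟨p, hp⟩ := hr.exists_isPath
  refine ⟨p.transfer _ fun e he => mem_edgeSet_restrict_sdiff.mpr
    ⟨p.edges_subset_edgeSet he, fun u hu huZ => ?_⟩⟩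
  obtain ⟨z', hz'⟩ := hZ u huZ
  exact notMem_support_of_neighborSet_eq_singleton hz' p hp (fun h => hx (h ▸ huZ))
    (fun h => hy (h ▸ huZ)) (p.mem_support_of_mem_edges he hu)

end Paths

section Distances

variable {H : SimpleGraph U}

def pdistₗ (hE : H.edgeSet.Finite) (c : Sym2 U) : (Sym2 U → ℝ) →ₗ[ℝ] ℝ where
  toFun ω := pdist H ω c
  map_add' _ _ := finsum_mem_add_distrib (hE.subset (pairPathEdges_subset c))
  map_smul' r ω := (smul_finsum_mem (r := r) (f := ω) (hE.subset (pairPathEdges_subset c))).symm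

lemma pdistₗ_apply (hE : H.edgeSet.Finite) (c : Sym2 U) (ω : Sym2 U → ℝ) :
    pdistₗ hE c ω = pdist H ω c := rfl

lemma pdist_congr {ω ω' : Sym2 U → ℝ} (h : ∀ e ∈ H.edgeSet, ω e = ω' e) (c : Sym2 U) :
    pdist H ω c = pdist H ω' c :=
  finsum_mem_congr rfl fun e he => h e (pairPathEdges_subset c he)

lemma pdist_indicator_edgeSet (δ : Sym2 U → ℝ) (c : Sym2 U) :
    pdist H (H.edgeSet.indicator δ) c = pdist H δ c :=
  pdist_congr (fun _ he => Set.indicator_of_mem he δ) c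

lemma pdist_single (hE : H.edgeSet.Finite) (e : Sym2 U) (r : ℝ) (c : Sym2 U) :
    pdist H (Pi.single e r) c = if e ∈ pairPathEdges H c then r else 0 := by
  have hfin := hE.subset (pairPathEdges_subset c)
  rw [pdist, finsum_mem_eq_finite_toFinset_sum _ hfin, Finset.sum_pi_single']
  simp

end Distances

section Kernel

variable {H : SimpleGraph U} {L : Set (Sym2 U)}

/-- The linear map `λ_L : ℝ^E → ℝ^L` is injective. -/
def CordKerTrivial (H : SimpleGraph U) (L : Set (Sym2 U)) : Prop :=
  ∀ δ : Sym2 U → ℝ, Function.support δ ⊆ H.edgeSet → (∀ c ∈ L, pdist H δ c = 0) → δ = 0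

lemma isProperWeighting_of_pos {ω : Sym2 U → ℝ} (hω : Function.support ω ⊆ H.edgeSet)
    (hpos : ∀ e ∈ H.edgeSet, 0 < ω e) : IsProperWeighting H ω := by
  rw [Function.support_subset_iff'] at hω
  refine ⟨⟨fun e => ?_, hω⟩, fun e he _ => hpos e he⟩
  by_cases he : e ∈ H.edgeSet
  exacts [(hpos e he).le, (hω e he).ge]

/-- A kernel vector `δ` of `λ_L` perturbs the proper weighting `|δ| + 1` into another one with the
same cord lengths. -/
lemma edgeWeightLasso_iff_cordKerTrivial (hE : H.edgeSet.Finite) :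
    EdgeWeightLasso H L ↔ CordKerTrivial H L := by
  constructor
  · intro h δ hδ hker
    set ω := H.edgeSet.indicator fun e => |δ e| + 1
    have hω : IsProperWeighting H ω :=
      isProperWeighting_of_pos Set.support_indicator_subset fun e he => by
        simp only [ω, Set.indicator_of_mem he]
        positivity
    have hωδ : IsProperWeighting H (ω + δ) :=
      isProperWeighting_of_pos ((Function.support_add _ _).trans
          (Set.union_subset Set.support_indicator_subset hδ)) fun e he => by
        simp only [ω, Pi.add_apply, Set.indicator_of_mem he]
        linarith [neg_abs_le (δ e)]
    have hiso : LIso L H ω H (ω + δ) := fun x y hxy => by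
      rw [← pdist_mk, ← pdist_mk, ← pdistₗ_apply hE _ (ω + δ), map_add, pdistₗ_apply,
        pdistₗ_apply, hker _ hxy, add_zero]
    simpa using h ω (ω + δ) hω hωδ hiso
  · intro h ω ω' hω hω' hiso
    refine sub_eq_zero.mp (h (ω - ω') (Function.support_subset_iff'.mpr fun e he => ?_) ?_)
    · simp [hω.zero_off e he, hω'.zero_off e he]
    · intro c hc
      induction c using Sym2.ind with
      | _ x y => rw [← pdistₗ_apply hE, map_sub, pdistₗ_apply, pdistₗ_apply, pdist_mk, pdist_mk,
          hiso x y hc, sub_self]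

end Kernel

section LinearAlgebra

variable {K V ι : Type*} [Field K] [AddCommGroup V] [Module K V] [Fintype ι]

lemma exists_ne_zero_forall_dotProduct_eq_zero [FiniteDimensional K V] (φ : V →ₗ[K] ι → K)
    (h : Module.finrank K V < Fintype.card ι) : ∃ ρ : ι → K, ρ ≠ 0 ∧ ∀ f, ρ ⬝ᵥ φ f = 0 := by
  have hdep : ¬ LinearIndependent K fun i => (LinearMap.proj i ∘ₗ φ : Module.Dual K V) :=
    fun hli => by
      have := hli.fintype_card_le_finrank
      rw [Subspace.dual_finrank_eq] at this
      omega
  obtain ⟨ρ, hρ, i, hi⟩ := Fintype.not_linearIndependent_iff.mp hdep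
  refine ⟨ρ, fun h0 => hi (congrFun h0 i), fun f => ?_⟩
  simpa [dotProduct] using LinearMap.congr_fun hρ f

/-- The range of `φ` has codimension one, so it is the kernel of `ρ ⬝ᵥ ·`. -/
lemma mem_range_of_dotProduct_eq_zero {φ : V →ₗ[K] ι → K} (hφ : Function.Injective φ)
    (hcard : Fintype.card ι = Module.finrank K V + 1) {ρ : ι → K} (hρ : ρ ≠ 0)
    (hann : ∀ f, ρ ⬝ᵥ φ f = 0) {u : ι → K} (hu : ρ ⬝ᵥ u = 0) : u ∈ LinearMap.range φ := by
  set ψ := dotProductBilin K K ρ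
  have hle : LinearMap.range φ ≤ LinearMap.ker ψ := by
    rintro _ ⟨f, rfl⟩
    simpa [ψ] using hann f
  have hψ : LinearMap.ker ψ ≠ ⊤ := fun htop => hρ <| funext fun i => by
    simpa [ψ] using LinearMap.congr_fun (LinearMap.ker_eq_top.mp htop) (Pi.single i 1)
  have hlt := Submodule.finrank_lt hψ
  rw [Module.finrank_pi, hcard] at hlt
  rw [Submodule.eq_of_le_of_finrank_le hle (by rw [LinearMap.finrank_range_of_inj hφ]; omega)]
  simpa [ψ] using hu

end LinearAlgebra

section CordMap

variable {H : SimpleGraph U} {L : Set (Sym2 U)}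

def cordMap (hE : H.edgeSet.Finite) (L : Set (Sym2 U)) : (H.edgeSet → ℝ) →ₗ[ℝ] L → ℝ :=
  LinearMap.pi (fun c : L => pdistₗ hE c) ∘ₗ Function.ExtendByZero.linearMap ℝ Subtype.val

lemma support_extend_val_subset {α M : Type*} [Zero M] {s : Set α} (f : s → M) :
    Function.support (Function.extend Subtype.val f 0) ⊆ s :=
  Function.support_subset_iff'.mpr fun _ he =>
    Function.extend_apply' _ _ _ fun ⟨e, he'⟩ => he (he' ▸ e.2)

lemma extend_val_restrict {α M : Type*} [Zero M] {s : Set α} {δ : α → M}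
    (hδ : Function.support δ ⊆ s) : Function.extend Subtype.val (fun e : s => δ e) 0 = δ := by
  funext e
  by_cases he : e ∈ s
  · exact Subtype.val_injective.extend_apply _ _ ⟨e, he⟩
  · rw [Function.support_subset_iff'.mp (support_extend_val_subset _) e he,
      Function.support_subset_iff'.mp hδ e he]

lemma cordMap_apply (hE : H.edgeSet.Finite) (f : H.edgeSet → ℝ) (c : L) :
    cordMap hE L f c = pdist H (Function.extend Subtype.val f 0) c := rfl

lemma finsum_mem_mul_eq_dotProduct {α R : Type*} [NonUnitalNonAssocSemiring R] {s : Set α}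
    [Fintype s] (ρ F : α → R) : ∑ᶠ c ∈ s, ρ c * F c = (fun c : s => ρ c) ⬝ᵥ fun c : s => F c := by
  rw [← finsum_set_coe_eq_finsum_mem, finsum_eq_sum_of_fintype]
  rfl

lemma rhoAnnihilates_iff (hE : H.edgeSet.Finite) [Fintype L] {ρ : Sym2 U → ℝ} :
    RhoAnnihilates H L ρ ↔ ∀ f, (fun c : L => ρ c) ⬝ᵥ cordMap hE L f = 0 := by
  refine ⟨fun h f => ?_, fun h η hη => ?_⟩
  · rw [← h _ (Function.support_subset_iff'.mp (support_extend_val_subset f)),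
      finsum_mem_mul_eq_dotProduct]
    rfl
  · have hcord : (cordMap hE L fun e => η e) = fun c : L => pdist H η c := funext fun c => by
      rw [cordMap_apply, extend_val_restrict (Function.support_subset_iff'.mpr hη)]
    rw [finsum_mem_mul_eq_dotProduct, ← hcord]
    exact h _

lemma CordKerTrivial.injective_cordMap (h : CordKerTrivial H L) (hE : H.edgeSet.Finite) :
    Function.Injective (cordMap hE L) := by
  refine (injective_iff_map_eq_zero _).mpr fun f hf => funext fun e => ?_
  have h0 := h _ (support_extend_val_subset f) fun c hc => congrFun hf ⟨c, hc⟩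
  simpa [Subtype.val_injective.extend_apply] using congrFun h0 e

lemma CordKerTrivial.ncard_edgeSet_le (h : CordKerTrivial H L) (hE : H.edgeSet.Finite)
    (hL : L.Finite) : H.edgeSet.ncard ≤ L.ncard := by
  have := hE.fintype
  have := hL.fintype
  have := LinearMap.finrank_le_finrank_of_injective (h.injective_cordMap hE)
  rwa [Module.finrank_pi, Module.finrank_pi, Set.fintypeCard_eq_ncard,
    Set.fintypeCard_eq_ncard] at this

lemma exists_rhoAnnihilates (hE : H.edgeSet.Finite) (hL : L.Finite)
    (h : H.edgeSet.ncard < L.ncard) :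
    ∃ ρ : Sym2 U → ℝ, ρ ≠ 0 ∧ Function.support ρ ⊆ L ∧ RhoAnnihilates H L ρ := by
  have := hE.fintype
  have := hL.fintype
  obtain ⟨ρ, hρ, hann⟩ := exists_ne_zero_forall_dotProduct_eq_zero (cordMap hE L)
    (by rwa [Module.finrank_pi, Set.fintypeCard_eq_ncard, Set.fintypeCard_eq_ncard])
  refine ⟨Function.extend Subtype.val ρ 0, fun h0 => hρ (funext fun c => ?_),
    support_extend_val_subset ρ, (rhoAnnihilates_iff hE).mpr ?_⟩
  · simpa [Subtype.val_injective.extend_apply] using congrFun h0 c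
  · simpa [Subtype.val_injective.extend_apply] using hann

lemma CordKerTrivial.exists_pdist_eq (h : CordKerTrivial H L) (hE : H.edgeSet.Finite)
    (hL : L.Finite) (hcard : L.ncard = H.edgeSet.ncard + 1) {ρ : Sym2 U → ℝ} (hρ : ρ ≠ 0)
    (hρL : Function.support ρ ⊆ L) (hann : RhoAnnihilates H L ρ) {u : Sym2 U → ℝ}
    (hu : ∑ᶠ c ∈ L, ρ c * u c = 0) :
    ∃ η : Sym2 U → ℝ, Function.support η ⊆ H.edgeSet ∧ ∀ c ∈ L, pdist H η c = u c := by
  have := hE.fintype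
  have := hL.fintype
  have hρ' : (fun c : L => ρ c) ≠ 0 := fun h0 => hρ <| funext fun c => by
    by_contra hc
    exact hc (congrFun h0 ⟨c, hρL hc⟩)
  obtain ⟨f, hf⟩ := mem_range_of_dotProduct_eq_zero (h.injective_cordMap hE)
    (by rwa [Module.finrank_pi, Set.fintypeCard_eq_ncard, Set.fintypeCard_eq_ncard]) hρ'
    ((rhoAnnihilates_iff hE).mp hann) (by rwa [← finsum_mem_mul_eq_dotProduct])
  exact ⟨_, support_extend_val_subset f, fun c hc => congrFun hf ⟨c, hc⟩⟩

end CordMap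

section Cords

variable {X : Set U} {L : Set (Sym2 U)} {a b v x : U}

def innerCords (L : Set (Sym2 U)) (a b : U) : Set (Sym2 U) := {c | c ∈ L ∧ a ∉ c ∧ b ∉ c}

lemma mem_sideSet_iff : x ∈ sideSet L a b ↔ s(a, x) ∈ L ∧ x ≠ b := by
  change s(a, x) ∈ L ∧ s(a, x) ≠ s(a, b) ↔ _
  rw [Ne, Sym2.congr_right]

lemma eq_or_mem_sideSet_or_mem_innerCords {c : Sym2 U} (hc : c ∈ L) :
    c = s(a, b) ∨ (∃ x ∈ sideSet L a b, c = s(a, x)) ∨ (∃ x ∈ sideSet L b a, c = s(b, x)) ∨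
      c ∈ innerCords L a b := by
  by_cases ha : a ∈ c
  · obtain ⟨x, rfl⟩ : ∃ x, c = s(a, x) := ⟨_, (Sym2.other_spec ha).symm⟩
    by_cases hxb : x = b
    · exact Or.inl (hxb ▸ rfl)
    · exact Or.inr (Or.inl ⟨x, mem_sideSet_iff.mpr ⟨hc, hxb⟩, rfl⟩)
  by_cases hb : b ∈ c
  · obtain ⟨x, rfl⟩ : ∃ x, c = s(b, x) := ⟨_, (Sym2.other_spec hb).symm⟩
    have hxa : x ≠ a := fun h => ha (h ▸ Sym2.mem_mk_right b x)
    exact Or.inr (Or.inr (Or.inl ⟨x, mem_sideSet_iff.mpr ⟨hc, hxa⟩, rfl⟩))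
  exact Or.inr (Or.inr (Or.inr ⟨hc, ha, hb⟩))

lemma eq_insert_union_of_mk_mem (habL : s(a, b) ∈ L) :
    L = insert s(a, b) (((fun x => s(a, x)) '' sideSet L a b ∪
      (fun x => s(b, x)) '' sideSet L b a) ∪ innerCords L a b) := by
  ext c
  refine ⟨fun hc => ?_, ?_⟩
  · rcases eq_or_mem_sideSet_or_mem_innerCords hc with h | ⟨x, hx, h⟩ | ⟨x, hx, h⟩ | h
    exacts [Or.inl h, Or.inr (Or.inl (Or.inl ⟨x, hx, h.symm⟩)),
      Or.inr (Or.inl (Or.inr ⟨x, hx, h.symm⟩)), Or.inr (Or.inr h)]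
  · rintro (rfl | (⟨x, hx, rfl⟩ | ⟨x, hx, rfl⟩) | hc)
    exacts [habL, (mem_sideSet_iff.mp hx).1, (mem_sideSet_iff.mp hx).1, hc.1]

namespace IsCordSet

variable (hL : IsCordSet X L)
include hL

lemma mem_of_mem_sideSet (hx : x ∈ sideSet L a b) : x ∈ X ∧ x ≠ a ∧ x ≠ b := by
  obtain ⟨hax, hxb⟩ := mem_sideSet_iff.mp hx
  exact ⟨(hL _ hax).2 x (Sym2.mem_mk_right a x),
    fun h => (hL _ hax).1 (Sym2.mk_isDiag_iff.mpr h.symm), hxb⟩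

lemma mem_of_mem_union_sideSet (hx : x ∈ sideSet L a b ∪ sideSet L b a) :
    x ∈ X ∧ x ≠ a ∧ x ≠ b := by
  rcases hx with hx | hx
  · exact hL.mem_of_mem_sideSet hx
  · obtain ⟨hxX, hxb, hxa⟩ := hL.mem_of_mem_sideSet hx
    exact ⟨hxX, hxa, hxb⟩

lemma mem_of_mem_innerCords {c : Sym2 U} (hc : c ∈ innerCords L a b) {u : U} (hu : u ∈ c) :
    u ∈ X ∧ u ≠ a ∧ u ≠ b :=
  ⟨(hL c hc.1).2 u hu, fun h => hc.2.1 (h ▸ hu), fun h => hc.2.2 (h ▸ hu)⟩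

lemma finite (hX : X.Finite) : L.Finite := by
  refine hX.sym2.subset fun c hc => ?_
  induction c using Sym2.ind with
  | _ x y => exact ⟨(hL _ hc).2 x (Sym2.mem_mk_left x y), (hL _ hc).2 y (Sym2.mem_mk_right x y)⟩

lemma finite_sideSet (hX : X.Finite) : (sideSet L a b).Finite :=
  hX.subset fun _ hx => (hL.mem_of_mem_sideSet hx).1

lemma finite_innerCords (hX : X.Finite) : (innerCords L a b).Finite :=
  (hL.finite hX).subset fun _ hc => hc.1

lemma disjoint_image_innerCords (hv : v ∉ X) (S : Set U) :
    Disjoint ((fun x => s(x, v)) '' S) (innerCords L a b) :=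
  Set.disjoint_left.mpr fun _ ⟨x, _, hxc⟩ hc =>
    hv (hL.mem_of_mem_innerCords hc (hxc ▸ Sym2.mem_mk_right x v)).1

lemma cherryLU_eq (hv : v ∉ X) :
    cherryLU L a b v =
      (fun x => s(x, v)) '' (sideSet L a b ∪ sideSet L b a) ∪ innerCords L a b := by
  have hfix : ∀ u, u ≠ a → u ≠ b → cherryMap a b v u = u := fun u ha hb => by
    simp [cherryMap, ha, hb]
  ext c
  constructor
  · rintro ⟨p, q, hpq, hne, rfl⟩
    rw [← Sym2.map_mk]
    rcases eq_or_mem_sideSet_or_mem_innerCords (a := a) (b := b) hpq with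
      h | ⟨x, hx, h⟩ | ⟨x, hx, h⟩ | hI
    · rcases Sym2.eq_iff.mp h with ⟨rfl, rfl⟩ | ⟨rfl, rfl⟩ <;> simp [cherryMap] at hne
    · obtain ⟨-, hxa, hxb⟩ := hL.mem_of_mem_sideSet hx
      refine Or.inl ⟨x, Or.inl hx, ?_⟩
      rw [h, Sym2.map_mk, hfix x hxa hxb, Sym2.eq_swap]
      simp [cherryMap]
    · obtain ⟨-, hxb, hxa⟩ := hL.mem_of_mem_sideSet hx
      refine Or.inl ⟨x, Or.inr hx, ?_⟩
      rw [h, Sym2.map_mk, hfix x hxa hxb, Sym2.eq_swap]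
      simp [cherryMap]
    · refine Or.inr ?_
      rwa [Sym2.map_congr (g := id) fun u hu =>
        hfix u (hL.mem_of_mem_innerCords hI hu).2.1 (hL.mem_of_mem_innerCords hI hu).2.2,
        Sym2.map_id]
  · rintro (⟨x, hx | hx, rfl⟩ | hI)
    · obtain ⟨hxX, hxa, hxb⟩ := hL.mem_of_mem_sideSet hx
      have hvx : v ≠ x := fun h => hv (h ▸ hxX)
      refine ⟨a, x, (mem_sideSet_iff.mp hx).1, ?_, ?_⟩ <;>
        simp [cherryMap, hxa, hxb, hvx, Sym2.eq_swap]
    · obtain ⟨hxX, hxb, hxa⟩ := hL.mem_of_mem_sideSet hx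
      have hvx : v ≠ x := fun h => hv (h ▸ hxX)
      refine ⟨b, x, (mem_sideSet_iff.mp hx).1, ?_, ?_⟩ <;>
        simp [cherryMap, hxa, hxb, hvx, Sym2.eq_swap]
    · induction c using Sym2.ind with
      | _ p q =>
        obtain ⟨-, hpa, hpb⟩ := hL.mem_of_mem_innerCords hI (Sym2.mem_mk_left p q)
        obtain ⟨-, hqa, hqb⟩ := hL.mem_of_mem_innerCords hI (Sym2.mem_mk_right p q)
        refine ⟨p, q, hI.1, ?_, ?_⟩ <;> rw [hfix p hpa hpb, hfix q hqa hqb]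
        exact fun h => (hL _ hI.1).1 (Sym2.mk_isDiag_iff.mpr h)

lemma mk_mem_cherryLU (hv : v ∉ X) (hx : x ∈ sideSet L a b ∪ sideSet L b a) :
    s(x, v) ∈ cherryLU L a b v := by
  rw [hL.cherryLU_eq hv]
  exact Or.inl ⟨x, hx, rfl⟩

lemma innerCords_subset_cherryLU (hv : v ∉ X) : innerCords L a b ⊆ cherryLU L a b v := by
  rw [hL.cherryLU_eq hv]
  exact Set.subset_union_right

lemma exists_sideSign (hv : v ∉ X) (hAB : Disjoint (sideSet L a b) (sideSet L b a)) :
    ∃ u : Sym2 U → ℝ, (∀ x ∈ sideSet L a b, u s(x, v) = -1) ∧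
      (∀ x ∈ sideSet L b a, u s(x, v) = 1) ∧ ∀ c ∈ innerCords L a b, u c = 0 := by
  have hdisj := (Set.disjoint_image_iff (f := fun x => s(x, v))
    fun _ _ => Sym2.congr_left.mp).mpr hAB
  refine ⟨((fun x => s(x, v)) '' sideSet L b a).indicator 1 -
    ((fun x => s(x, v)) '' sideSet L a b).indicator 1, fun x hx => ?_, fun x hx => ?_,
    fun c hcI => ?_⟩
  · have hxA := Set.mem_image_of_mem (fun x => s(x, v)) hx
    simp [Set.indicator_of_mem hxA, Set.indicator_of_notMem (Set.disjoint_left.mp hdisj hxA)]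
  · have hxB := Set.mem_image_of_mem (fun x => s(x, v)) hx
    simp [Set.indicator_of_mem hxB, Set.indicator_of_notMem (Set.disjoint_right.mp hdisj hxB)]
  · simp [Set.indicator_of_notMem
      (Set.disjoint_right.mp (hL.disjoint_image_innerCords hv _) hcI)]

lemma finite_cherryLU (hX : X.Finite) (hv : v ∉ X) : (cherryLU L a b v).Finite := by
  rw [hL.cherryLU_eq hv]
  exact (((hL.finite_sideSet hX).union (hL.finite_sideSet hX)).image _).union
    (hL.finite_innerCords hX)

lemma finsum_mem_cherryLU (hX : X.Finite) (hv : v ∉ X) (F : Sym2 U → ℝ) :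
    ∑ᶠ c ∈ cherryLU L a b v, F c =
      ∑ᶠ x ∈ sideSet L a b ∪ sideSet L b a, F s(x, v) + ∑ᶠ c ∈ innerCords L a b, F c := by
  rw [hL.cherryLU_eq hv, finsum_mem_union (hL.disjoint_image_innerCords hv _)
      (((hL.finite_sideSet hX).union (hL.finite_sideSet hX)).image _) (hL.finite_innerCords hX),
    finsum_mem_image fun _ _ _ _ h => Sym2.congr_left.mp h]

/-- `L` splits as `{ab} ⊔ a·A ⊔ b·B ⊔ I` and `L_U` as `v·(A ∪ B) ⊔ I`. -/
lemma ncard_eq_ncard_cherryLU_add (hX : X.Finite) (hv : v ∉ X) (hab : a ≠ b)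
    (habL : s(a, b) ∈ L) :
    L.ncard = (cherryLU L a b v).ncard + 1 + (sideSet L a b ∩ sideSet L b a).ncard := by
  rw [hL.cherryLU_eq hv]
  set A := sideSet L a b
  set B := sideSet L b a
  have hA : A.Finite := hL.finite_sideSet hX
  have hB : B.Finite := hL.finite_sideSet hX
  have hI : (innerCords L a b).Finite := hL.finite_innerCords hX
  have hdisjAB : Disjoint ((fun x => s(a, x)) '' A) ((fun x => s(b, x)) '' B) := by
    refine Set.disjoint_left.mpr ?_
    rintro _ ⟨x, hx, rfl⟩ ⟨y, hy, hxy⟩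
    rcases Sym2.eq_iff.mp hxy with ⟨h, -⟩ | ⟨-, h⟩
    exacts [hab h.symm, (hL.mem_of_mem_sideSet hy).2.2 h]
  have hdisjI : Disjoint ((fun x => s(a, x)) '' A ∪ (fun x => s(b, x)) '' B)
      (innerCords L a b) := by
    refine Set.disjoint_left.mpr ?_
    rintro _ (⟨x, -, rfl⟩ | ⟨x, -, rfl⟩) hc
    exacts [hc.2.1 (Sym2.mem_mk_left a x), hc.2.2 (Sym2.mem_mk_left b x)]
  have hab_notMem :
      s(a, b) ∉ ((fun x => s(a, x)) '' A ∪ (fun x => s(b, x)) '' B) ∪ innerCords L a b := by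
    rintro ((⟨x, hx, h⟩ | ⟨x, hx, h⟩) | hc)
    · exact (hL.mem_of_mem_sideSet hx).2.2 (Sym2.congr_right.mp h)
    · exact (hL.mem_of_mem_sideSet hx).2.2 (Sym2.congr_right.mp (h.trans Sym2.eq_swap))
    · exact hc.2.1 (Sym2.mem_mk_left a b)
  have hinj : ∀ z : U, Function.Injective fun x => s(z, x) := fun _ _ _ => Sym2.congr_right.mp
  conv_lhs => rw [eq_insert_union_of_mk_mem habL]
  rw [Set.ncard_insert_of_notMem hab_notMem ((hA.image _).union (hB.image _) |>.union hI),
    Set.ncard_union_eq hdisjI ((hA.image _).union (hB.image _)) hI,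
    Set.ncard_union_eq hdisjAB (hA.image _) (hB.image _),
    Set.ncard_union_eq (hL.disjoint_image_innerCords hv _) ((hA.union hB).image _) hI,
    Set.ncard_image_of_injective _ (hinj a), Set.ncard_image_of_injective _ (hinj b),
    Set.ncard_image_of_injective _ fun _ _ => Sym2.congr_left.mp]
  have := Set.ncard_union_add_ncard_inter A B hA hB
  omega

end IsCordSet

end Cords

section CherryTree

variable {X : Set U} {G : SimpleGraph U} {L : Set (Sym2 U)} {a b v w x y : U}

/-- `a, b` is a proper cherry of the finite tree `G` at the apex `v`, with third neighbour `w`. -/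
structure CherryTree (X : Set U) (G : SimpleGraph U) (a b v w : U) : Prop where
  edgeSet_finite : G.edgeSet.Finite
  isAcyclic : G.IsAcyclic
  reachable : ∀ x ∈ G.support, ∀ y ∈ G.support, G.Reachable x y
  subset_support : X ⊆ G.support
  apex_notMem : v ∉ X
  neighborSet_left : G.neighborSet a = {v}
  neighborSet_right : G.neighborSet b = {v}
  neighborSet_apex : G.neighborSet v = {a, b, w}
  left_ne_right : a ≠ b
  third_notMem : w ∉ ({a, b} : Set U)

lemma neighborSet_eq_singleton_of_isLeaf (hx : IsLeaf G x) (hxy : G.Adj x y) :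
    G.neighborSet x = {y} := by
  obtain ⟨z, hz⟩ := Set.ncard_eq_one.mp hx
  have hy : y ∈ G.neighborSet x := hxy
  rw [hz, Set.mem_singleton_iff] at hy
  rw [hz, hy]

lemma IsXTree.exists_cherryTree (hT : IsXTree X G) (hch : IsProperCherry G a b v) :
    ∃ w, CherryTree X G a b v w := by
  obtain ⟨⟨hab, hla, hlb, hav, hbv⟩, hdeg⟩ := hch
  have hsub : ({a, b} : Set U) ⊆ G.neighborSet v :=
    Set.insert_subset_iff.mpr ⟨hav.symm, Set.singleton_subset_iff.mpr hbv.symm⟩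
  obtain ⟨w, hw⟩ := Set.ncard_eq_one.mp (show (G.neighborSet v \ {a, b}).ncard = 1 by
    rw [Set.ncard_sdiff hsub, Set.ncard_pair hab, show (G.neighborSet v).ncard = 3 from hdeg])
  have hsupport : G.support.Finite := hT.support_finite
  refine ⟨w, hsupport.sym2.subset fun e he => ?_, hT.acyclic, hT.connected, fun x hx => ?_,
    fun hv => ?_, neighborSet_eq_singleton_of_isLeaf hla hav,
    neighborSet_eq_singleton_of_isLeaf hlb hbv, ?_, hab, (hw ▸ Set.mem_singleton w).2⟩
  · induction e using Sym2.ind with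
    | _ u u' => exact ⟨⟨u', he⟩, ⟨u, he.symm⟩⟩
  · rw [hT.leaves_eq] at hx
    obtain ⟨z, hz⟩ := Set.ncard_eq_one.mp hx
    exact ⟨z, show z ∈ G.neighborSet x by simp [hz]⟩
  · rw [hT.leaves_eq] at hv
    exact absurd (hdeg.symm.trans hv) (by norm_num)
  · rw [← Set.union_sdiff_cancel hsub, hw, Set.insert_union, Set.singleton_union]

namespace CherryTree

variable (hc : CherryTree X G a b v w)
include hc

lemma symm : CherryTree X G b a v w where
  __ := hc
  neighborSet_left := hc.neighborSet_right
  neighborSet_right := hc.neighborSet_left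
  neighborSet_apex := by rw [hc.neighborSet_apex, Set.insert_comm]
  left_ne_right := hc.left_ne_right.symm
  third_notMem := Set.pair_comm a b ▸ hc.third_notMem

lemma adj_left : G.Adj a v := show v ∈ G.neighborSet a by simp [hc.neighborSet_left]

lemma adj_apex : G.Adj v w := show w ∈ G.neighborSet v by simp [hc.neighborSet_apex]

lemma mem_core (hx : x ∈ X) (hxa : x ≠ a) (hxb : x ≠ b) : x ∈ G.support \ {a, b} :=
  ⟨hc.subset_support hx, by simp [hxa, hxb]⟩

lemma apex_mem_core : v ∈ G.support \ {a, b} :=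
  ⟨⟨w, hc.adj_apex⟩, by simp [hc.adj_left.ne.symm, hc.symm.adj_left.ne.symm]⟩

lemma ne_apex (hx : x ∈ X) : x ≠ v := fun h => hc.apex_notMem (h ▸ hx)

lemma edge_left_ne_right : s(a, v) ≠ s(b, v) := fun h => hc.left_ne_right (Sym2.congr_left.mp h)

lemma apexEdge_mem_core : s(v, w) ∈ (restrict G (G.support \ {a, b})).edgeSet :=
  ⟨hc.adj_apex, hc.apex_mem_core, ⟨v, hc.adj_apex.symm⟩, hc.third_notMem⟩

lemma isAcyclic_core : (restrict G (G.support \ {a, b})).IsAcyclic :=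
  hc.isAcyclic.anti (restrict_le _)

lemma reachable_core (hx : x ∈ G.support \ {a, b}) (hy : y ∈ G.support \ {a, b}) :
    (restrict G (G.support \ {a, b})).Reachable x y := by
  refine reachable_restrict_sdiff (fun z hz => ?_) (hc.reachable x hx.1 y hy.1) hx.2 hy.2
  rcases hz with rfl | rfl
  exacts [⟨v, hc.neighborSet_left⟩, ⟨v, hc.neighborSet_right⟩]

lemma pathEdges_core (hx : x ∈ G.support \ {a, b}) (hy : y ∈ G.support \ {a, b}) :
    pathEdges (restrict G (G.support \ {a, b})) x y = pathEdges G x y :=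
  pathEdges_of_le (restrict_le _) hc.isAcyclic (hc.reachable_core hx hy)

lemma edgeSet_core :
    (restrict G (G.support \ {a, b})).edgeSet = G.edgeSet \ {s(a, v), s(b, v)} := by
  ext e
  rw [mem_edgeSet_restrict_sdiff, Set.mem_sdiff]
  refine and_congr_right fun he => ⟨fun h hab => ?_, fun h u hu hab => h ?_⟩
  · rcases hab with rfl | rfl
    exacts [h a (Sym2.mem_mk_left a v) (Or.inl rfl), h b (Sym2.mem_mk_left b v) (Or.inr rfl)]
  · rcases hab with rfl | rfl
    exacts [Or.inl (eq_mk_of_neighborSet_eq_singleton hc.neighborSet_left he hu),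
      Or.inr (eq_mk_of_neighborSet_eq_singleton hc.neighborSet_right he hu)]

lemma edge_left_notMem_core : s(a, v) ∉ (restrict G (G.support \ {a, b})).edgeSet := by
  simp [hc.edgeSet_core]

lemma edge_right_notMem_core : s(b, v) ∉ (restrict G (G.support \ {a, b})).edgeSet := by
  simp [hc.edgeSet_core]

lemma edgeSet_core_finite : (restrict G (G.support \ {a, b})).edgeSet.Finite :=
  hc.edgeSet_finite.subset (hc.edgeSet_core ▸ Set.sdiff_subset)

lemma ncard_edgeSet :
    G.edgeSet.ncard = (restrict G (G.support \ {a, b})).edgeSet.ncard + 2 := by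
  have hsub : ({s(a, v), s(b, v)} : Set (Sym2 U)) ⊆ G.edgeSet :=
    Set.insert_subset_iff.mpr ⟨hc.adj_left, Set.singleton_subset_iff.mpr hc.symm.adj_left⟩
  rw [hc.edgeSet_core, ← Set.ncard_sdiff_add_ncard_of_subset hsub hc.edgeSet_finite,
    Set.ncard_pair hc.edge_left_ne_right]

lemma neighborSet_core_apex : (restrict G (G.support \ {a, b})).neighborSet v = {w} := by
  ext z
  change G.Adj v z ∧ v ∈ G.support \ {a, b} ∧ z ∈ G.support \ {a, b} ↔ z = w
  rw [← SimpleGraph.mem_neighborSet, hc.neighborSet_apex]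
  constructor
  · rintro ⟨hz | hz | hz, -, -, hzab⟩
    · exact absurd (Or.inl hz) hzab
    · exact absurd (Or.inr hz) hzab
    · exact hz
  · rintro rfl
    exact ⟨by simp, hc.apexEdge_mem_core.2⟩

lemma pathEdges_left_right : pathEdges G a b = {s(a, v), s(b, v)} := by
  have ha : a ∈ G.support := ⟨v, hc.adj_left⟩
  have hb : b ∈ G.support := ⟨v, hc.symm.adj_left⟩
  rw [pathEdges_eq_insert hc.isAcyclic hc.neighborSet_left hc.left_ne_right
      (hc.reachable a ha b hb), pathEdges_comm,
    pathEdges_eq_insert hc.isAcyclic hc.neighborSet_right hc.symm.adj_left.ne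
      (hc.reachable b hb v hc.apex_mem_core.1), pathEdges_self, insert_empty_eq]

lemma pathEdges_left (hx : x ∈ G.support \ {a, b}) :
    pathEdges G a x = insert s(a, v) (pathEdges (restrict G (G.support \ {a, b})) v x) := by
  rw [pathEdges_eq_insert hc.isAcyclic hc.neighborSet_left (fun h => hx.2 (Or.inl h.symm))
      (hc.reachable a ⟨v, hc.adj_left⟩ x hx.1), hc.pathEdges_core hc.apex_mem_core hx]

lemma apexEdge_mem_pathEdges (hx : x ∈ G.support \ {a, b}) (hxv : x ≠ v) :
    s(v, w) ∈ pathEdges (restrict G (G.support \ {a, b})) x v := by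
  rw [pathEdges_comm, pathEdges_eq_insert hc.isAcyclic_core hc.neighborSet_core_apex hxv.symm
    (hc.reachable_core hc.apex_mem_core hx)]
  exact Set.mem_insert _ _

lemma apexEdge_notMem_pathEdges (hx : x ∈ G.support \ {a, b}) (hy : y ∈ G.support \ {a, b})
    (hxv : x ≠ v) (hyv : y ≠ v) :
    s(v, w) ∉ pathEdges (restrict G (G.support \ {a, b})) x y := fun h =>
  notMem_of_mem_pathEdges hc.isAcyclic_core hc.neighborSet_core_apex (hc.reachable_core hx hy)
    hxv hyv h (Sym2.mem_mk_left v w)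

lemma pdist_left_right (δ : Sym2 U → ℝ) : pdist G δ s(a, b) = δ s(a, v) + δ s(b, v) := by
  rw [pdist_mk, tdist, hc.pathEdges_left_right, finsum_mem_pair hc.edge_left_ne_right]

lemma pdist_left (hx : x ∈ G.support \ {a, b}) (δ : Sym2 U → ℝ) :
    pdist G δ s(a, x) = δ s(a, v) + pdist (restrict G (G.support \ {a, b})) δ s(x, v) := by
  rw [pdist_mk, pdist_mk, tdist, tdist, hc.pathEdges_left hx, pathEdges_comm x v,
    finsum_mem_insert _ (fun h => hc.edge_left_notMem_core h.1)
      (hc.edgeSet_core_finite.subset fun _ he => he.1)]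

lemma pdist_right (hx : x ∈ G.support \ {a, b}) (δ : Sym2 U → ℝ) :
    pdist G δ s(b, x) = δ s(b, v) + pdist (restrict G (G.support \ {a, b})) δ s(x, v) := by
  have := hc.symm.pdist_left (Set.pair_comm a b ▸ hx) δ
  rwa [Set.pair_comm] at this

lemma pdist_inner (hL : IsCordSet X L) {c : Sym2 U} (hcI : c ∈ innerCords L a b)
    (δ : Sym2 U → ℝ) : pdist G δ c = pdist (restrict G (G.support \ {a, b})) δ c := by
  induction c using Sym2.ind with
  | _ x y =>
    obtain ⟨hxX, hxa, hxb⟩ := hL.mem_of_mem_innerCords hcI (Sym2.mem_mk_left x y)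
    obtain ⟨hyX, hya, hyb⟩ := hL.mem_of_mem_innerCords hcI (Sym2.mem_mk_right x y)
    rw [pdist_mk, pdist_mk, tdist, tdist,
      hc.pathEdges_core (hc.mem_core hxX hxa hxb) (hc.mem_core hyX hya hyb)]

lemma pdist_single_apexEdge (hx : x ∈ X) (hxa : x ≠ a) (hxb : x ≠ b) (r : ℝ) :
    pdist (restrict G (G.support \ {a, b})) (Pi.single s(v, w) r) s(x, v) = r := by
  rw [pdist_single hc.edgeSet_core_finite, pairPathEdges_mk,
    if_pos (hc.apexEdge_mem_pathEdges (hc.mem_core hx hxa hxb) (hc.ne_apex hx))]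

lemma pdist_single_apexEdge_inner (hL : IsCordSet X L) {c : Sym2 U}
    (hcI : c ∈ innerCords L a b) (r : ℝ) :
    pdist (restrict G (G.support \ {a, b})) (Pi.single s(v, w) r) c = 0 := by
  induction c using Sym2.ind with
  | _ x y =>
    obtain ⟨hxX, hxa, hxb⟩ := hL.mem_of_mem_innerCords hcI (Sym2.mem_mk_left x y)
    obtain ⟨hyX, hya, hyb⟩ := hL.mem_of_mem_innerCords hcI (Sym2.mem_mk_right x y)
    rw [pdist_single hc.edgeSet_core_finite, pairPathEdges_mk,
      if_neg (hc.apexEdge_notMem_pathEdges (hc.mem_core hxX hxa hxb) (hc.mem_core hyX hya hyb)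
        (hc.ne_apex hxX) (hc.ne_apex hyX))]

lemma forall_pdist_eq_zero_iff (hL : IsCordSet X L) (δ : Sym2 U → ℝ) :
    (∀ c ∈ L, pdist G δ c = 0) ↔
      (s(a, b) ∈ L → δ s(a, v) + δ s(b, v) = 0) ∧
      (∀ x ∈ sideSet L a b,
        δ s(a, v) + pdist (restrict G (G.support \ {a, b})) δ s(x, v) = 0) ∧
      (∀ x ∈ sideSet L b a,
        δ s(b, v) + pdist (restrict G (G.support \ {a, b})) δ s(x, v) = 0) ∧
      ∀ c ∈ innerCords L a b, pdist (restrict G (G.support \ {a, b})) δ c = 0 := by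
  have hA : ∀ x ∈ sideSet L a b,
      pdist G δ s(a, x) = δ s(a, v) + pdist (restrict G (G.support \ {a, b})) δ s(x, v) :=
    fun x hx => by
      obtain ⟨hxX, hxa, hxb⟩ := hL.mem_of_mem_sideSet hx
      exact hc.pdist_left (hc.mem_core hxX hxa hxb) δ
  have hB : ∀ x ∈ sideSet L b a,
      pdist G δ s(b, x) = δ s(b, v) + pdist (restrict G (G.support \ {a, b})) δ s(x, v) :=
    fun x hx => by
      obtain ⟨hxX, hxb, hxa⟩ := hL.mem_of_mem_sideSet hx
      exact hc.pdist_right (hc.mem_core hxX hxa hxb) δ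
  constructor
  · intro h
    exact ⟨fun hab => hc.pdist_left_right δ ▸ h _ hab,
      fun x hx => hA x hx ▸ h _ (mem_sideSet_iff.mp hx).1,
      fun x hx => hB x hx ▸ h _ (mem_sideSet_iff.mp hx).1,
      fun c hcI => hc.pdist_inner hL hcI δ ▸ h c hcI.1⟩
  · rintro ⟨hab, hA', hB', hI⟩ c hcL
    rcases eq_or_mem_sideSet_or_mem_innerCords (a := a) (b := b) hcL with
      rfl | ⟨x, hx, rfl⟩ | ⟨x, hx, rfl⟩ | hcI
    · rw [hc.pdist_left_right]
      exact hab hcL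
    · rw [hA x hx]
      exact hA' x hx
    · rw [hB x hx]
      exact hB' x hx
    · rw [hc.pdist_inner hL hcI]
      exact hI c hcI

lemma exists_extension (α β : ℝ) {η : Sym2 U → ℝ}
    (hη : Function.support η ⊆ (restrict G (G.support \ {a, b})).edgeSet) :
    ∃ δ : Sym2 U → ℝ, Function.support δ ⊆ G.edgeSet ∧ δ s(a, v) = α ∧ δ s(b, v) = β ∧
      ∀ c, pdist (restrict G (G.support \ {a, b})) δ c =
        pdist (restrict G (G.support \ {a, b})) η c := by
  have hηa : η s(a, v) = 0 := Function.notMem_support.mp fun h => hc.edge_left_notMem_core (hη h)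
  have hηb : η s(b, v) = 0 := Function.notMem_support.mp fun h => hc.edge_right_notMem_core (hη h)
  refine ⟨Pi.single s(a, v) α + Pi.single s(b, v) β + η,
    Function.support_subset_iff'.mpr fun e he => ?_, by simp [hc.edge_left_ne_right, hηa],
    by simp [hc.edge_left_ne_right.symm, hηb], pdist_congr fun e he => ?_⟩
  · have hea : e ≠ s(a, v) := fun h => he (h ▸ hc.adj_left)
    have heb : e ≠ s(b, v) := fun h => he (h ▸ hc.symm.adj_left)
    have heU : e ∉ (restrict G (G.support \ {a, b})).edgeSet := fun h =>
      he (SimpleGraph.edgeSet_mono (restrict_le _) h)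
    simp [hea, heb, Function.support_subset_iff'.mp hη e heU]
  · have hea : e ≠ s(a, v) := fun h => hc.edge_left_notMem_core (h ▸ he)
    have heb : e ≠ s(b, v) := fun h => hc.edge_right_notMem_core (h ▸ he)
    simp [hea, heb]

lemma mk_mem_of_cordKerTrivial (hL : IsCordSet X L) (h : CordKerTrivial G L) : s(a, b) ∈ L := by
  by_contra habL
  obtain ⟨δ, hδ, hδa, hδb, hδU⟩ := hc.exists_extension 1 1 (η := Pi.single s(v, w) (-1))
    (Pi.support_single_subset.trans (Set.singleton_subset_iff.mpr hc.apexEdge_mem_core))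
  have h0 := h δ hδ <| (hc.forall_pdist_eq_zero_iff hL δ).mpr
    ⟨fun hab => absurd hab habL, fun x hx => ?_, fun x hx => ?_, fun c hcI => ?_⟩
  · exact one_ne_zero (hδa ▸ congrFun h0 s(a, v))
  · obtain ⟨hxX, hxa, hxb⟩ := hL.mem_of_mem_sideSet hx
    rw [hδU, hc.pdist_single_apexEdge hxX hxa hxb, hδa]
    norm_num
  · obtain ⟨hxX, hxb, hxa⟩ := hL.mem_of_mem_sideSet hx
    rw [hδU, hc.pdist_single_apexEdge hxX hxa hxb, hδb]
    norm_num
  · rw [hδU, hc.pdist_single_apexEdge_inner hL hcI]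

lemma cordKerTrivial_core (hL : IsCordSet X L) (h : CordKerTrivial G L) :
    CordKerTrivial (restrict G (G.support \ {a, b})) (cherryLU L a b v) := by
  intro η hη hk
  have hηa : η s(a, v) = 0 := Function.notMem_support.mp fun h' =>
    hc.edge_left_notMem_core (hη h')
  have hηb : η s(b, v) = 0 := Function.notMem_support.mp fun h' =>
    hc.edge_right_notMem_core (hη h')
  refine h η (hη.trans (SimpleGraph.edgeSet_mono (restrict_le _))) <|
    (hc.forall_pdist_eq_zero_iff hL η).mpr
      ⟨fun _ => by rw [hηa, hηb, add_zero], fun x hx => ?_, fun x hx => ?_,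
        fun c hcI => hk c (hL.innerCords_subset_cherryLU hc.apex_notMem hcI)⟩
  · rw [hηa, zero_add]
    exact hk _ (hL.mk_mem_cherryLU hc.apex_notMem (Or.inl hx))
  · rw [hηb, zero_add]
    exact hk _ (hL.mk_mem_cherryLU hc.apex_notMem (Or.inr hx))

/-- Testing an annihilator of `L_U` against the weighting `1_{vw}`. -/
lemma finsum_sideSet_union_eq_zero (hX : X.Finite) (hL : IsCordSet X L) {ρ : Sym2 U → ℝ}
    (hann : RhoAnnihilates (restrict G (G.support \ {a, b})) (cherryLU L a b v) ρ) :
    ∑ᶠ x ∈ sideSet L a b ∪ sideSet L b a, ρ s(x, v) = 0 := by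
  have h := hann (Pi.single s(v, w) 1) (Function.support_subset_iff'.mp
    (Pi.support_single_subset.trans (Set.singleton_subset_iff.mpr hc.apexEdge_mem_core)))
  have hside : ∑ᶠ x ∈ sideSet L a b ∪ sideSet L b a,
      ρ s(x, v) * pdist (restrict G (G.support \ {a, b})) (Pi.single s(v, w) 1) s(x, v) =
      ∑ᶠ x ∈ sideSet L a b ∪ sideSet L b a, ρ s(x, v) :=
    finsum_mem_congr rfl fun x hx => by
      obtain ⟨hxX, hxa, hxb⟩ := hL.mem_of_mem_union_sideSet hx
      rw [hc.pdist_single_apexEdge hxX hxa hxb, mul_one]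
  have hinner : ∑ᶠ c ∈ innerCords L a b,
      ρ c * pdist (restrict G (G.support \ {a, b})) (Pi.single s(v, w) 1) c = 0 :=
    (finsum_mem_congr rfl fun c hcI => by
      rw [hc.pdist_single_apexEdge_inner hL hcI, mul_zero]).trans (finsum_mem_zero _)
  rwa [hL.finsum_mem_cherryLU hX hc.apex_notMem, hside, hinner, add_zero] at h

lemma finsum_mul_eq_of_disjoint (hX : X.Finite) (hL : IsCordSet X L)
    (hAB : Disjoint (sideSet L a b) (sideSet L b a)) {ρ : Sym2 U → ℝ}
    (hann : RhoAnnihilates (restrict G (G.support \ {a, b})) (cherryLU L a b v) ρ)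
    {u : Sym2 U → ℝ} (t : ℝ) (huA : ∀ x ∈ sideSet L a b, u s(x, v) = -t)
    (huB : ∀ x ∈ sideSet L b a, u s(x, v) = t) (huI : ∀ c ∈ innerCords L a b, u c = 0) :
    ∑ᶠ c ∈ cherryLU L a b v, ρ c * u c = -2 * t * ∑ᶠ x ∈ sideSet L a b, ρ s(x, v) := by
  have hA := hL.finite_sideSet (a := a) (b := b) hX
  have hB := hL.finite_sideSet (a := b) (b := a) hX
  have h0 := hc.finsum_sideSet_union_eq_zero hX hL hann
  rw [finsum_mem_union hAB hA hB] at h0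
  have hsumA : ∑ᶠ x ∈ sideSet L a b, ρ s(x, v) * u s(x, v) =
      (∑ᶠ x ∈ sideSet L a b, ρ s(x, v)) * -t := by
    rw [finsum_mem_mul]
    exact finsum_mem_congr rfl fun x hx => by rw [huA x hx]
  have hsumB : ∑ᶠ x ∈ sideSet L b a, ρ s(x, v) * u s(x, v) =
      (∑ᶠ x ∈ sideSet L b a, ρ s(x, v)) * t := by
    rw [finsum_mem_mul]
    exact finsum_mem_congr rfl fun x hx => by rw [huB x hx]
  have hsumI : ∑ᶠ c ∈ innerCords L a b, ρ c * u c = 0 :=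
    (finsum_mem_congr rfl fun c hcI => by rw [huI c hcI, mul_zero]).trans (finsum_mem_zero _)
  rw [hL.finsum_mem_cherryLU hX hc.apex_notMem, finsum_mem_union hAB hA hB, hsumA, hsumB, hsumI]
  linear_combination t * h0

/-- If `∑_{x ∈ A} ρ(xv)` vanished, the vector `-1` on `v·A`, `1` on `v·B`, `0` on the inner cords
would be `λ_{L_U}(η)`, and `1_{av} - 1_{bv} + η` would be a nonzero kernel vector of `λ_L`. -/
lemma finsum_sideSet_ne_zero (hX : X.Finite) (hL : IsCordSet X L) (h : CordKerTrivial G L)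
    (hU : CordKerTrivial (restrict G (G.support \ {a, b})) (cherryLU L a b v))
    (hcard : (cherryLU L a b v).ncard =
      (restrict G (G.support \ {a, b})).edgeSet.ncard + 1)
    (hAB : Disjoint (sideSet L a b) (sideSet L b a)) {ρ : Sym2 U → ℝ} (hρ : ρ ≠ 0)
    (hρL : Function.support ρ ⊆ cherryLU L a b v)
    (hann : RhoAnnihilates (restrict G (G.support \ {a, b})) (cherryLU L a b v) ρ) :
    ∑ᶠ x ∈ sideSet L a b, ρ s(x, v) ≠ 0 := by
  intro hsum
  obtain ⟨u, huA, huB, huI⟩ := hL.exists_sideSign hc.apex_notMem hAB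
  obtain ⟨η, hη, hηu⟩ := hU.exists_pdist_eq hc.edgeSet_core_finite
    (hL.finite_cherryLU hX hc.apex_notMem) hcard hρ hρL hann
    (by rw [hc.finsum_mul_eq_of_disjoint hX hL hAB hann 1 huA huB huI, hsum, mul_zero])
  obtain ⟨δ, hδ, hδa, hδb, hδU⟩ := hc.exists_extension 1 (-1) hη
  have h0 := h δ hδ <| (hc.forall_pdist_eq_zero_iff hL δ).mpr
    ⟨fun _ => by rw [hδa, hδb]; norm_num, fun x hx => ?_, fun x hx => ?_, fun c hcI => ?_⟩
  · exact one_ne_zero (hδa ▸ congrFun h0 s(a, v))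
  · rw [hδU, hηu _ (hL.mk_mem_cherryLU hc.apex_notMem (Or.inl hx)), huA x hx, hδa]
    norm_num
  · rw [hδU, hηu _ (hL.mk_mem_cherryLU hc.apex_notMem (Or.inr hx)), huB x hx, hδb]
    norm_num
  · rw [hδU, hηu c (hL.innerCords_subset_cherryLU hc.apex_notMem hcI), huI c hcI]

lemma edge_left_eq_zero_of_mem_inter (hL : IsCordSet X L) (habL : s(a, b) ∈ L)
    {δ : Sym2 U → ℝ} (hk : ∀ c ∈ L, pdist G δ c = 0) (hx : x ∈ sideSet L a b ∩ sideSet L b a) :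
    δ s(a, v) = 0 := by
  obtain ⟨hab, hA, hB, -⟩ := (hc.forall_pdist_eq_zero_iff hL δ).mp hk
  linarith [hab habL, hA x hx.1, hB x hx.2]

lemma edge_left_eq_zero_of_rhoAnnihilates (hX : X.Finite) (hL : IsCordSet X L)
    (habL : s(a, b) ∈ L) (hAB : Disjoint (sideSet L a b) (sideSet L b a)) {ρ : Sym2 U → ℝ}
    (hann : RhoAnnihilates (restrict G (G.support \ {a, b})) (cherryLU L a b v) ρ)
    (hsum : ∑ᶠ x ∈ sideSet L a b, ρ s(x, v) ≠ 0) {δ : Sym2 U → ℝ}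
    (hk : ∀ c ∈ L, pdist G δ c = 0) : δ s(a, v) = 0 := by
  obtain ⟨hab, hA, hB, hI⟩ := (hc.forall_pdist_eq_zero_iff hL δ).mp hk
  have h0 := hann ((restrict G (G.support \ {a, b})).edgeSet.indicator δ)
    (Function.support_subset_iff'.mp Set.support_indicator_subset)
  rw [hc.finsum_mul_eq_of_disjoint hX hL hAB hann (δ s(a, v))
    (fun x hx => by rw [pdist_indicator_edgeSet]; linarith [hA x hx])
    (fun x hx => by rw [pdist_indicator_edgeSet]; linarith [hB x hx, hab habL])
    (fun c hcI => by rw [pdist_indicator_edgeSet, hI c hcI])] at h0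
  simpa [hsum] using h0

lemma cordKerTrivial_of_core (hL : IsCordSet X L) (habL : s(a, b) ∈ L)
    (hU : CordKerTrivial (restrict G (G.support \ {a, b})) (cherryLU L a b v))
    (h : ∀ δ : Sym2 U → ℝ, Function.support δ ⊆ G.edgeSet → (∀ c ∈ L, pdist G δ c = 0) →
      δ s(a, v) = 0) :
    CordKerTrivial G L := by
  intro δ hδ hk
  have hδa := h δ hδ hk
  obtain ⟨hab, hA, hB, hI⟩ := (hc.forall_pdist_eq_zero_iff hL δ).mp hk
  have hδb : δ s(b, v) = 0 := by linarith [hab habL]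
  have hη := hU _ Set.support_indicator_subset fun c hcU => by
    rw [pdist_indicator_edgeSet]
    rw [hL.cherryLU_eq hc.apex_notMem] at hcU
    rcases hcU with ⟨x, hx | hx, rfl⟩ | hcI
    · linarith [hA x hx]
    · linarith [hB x hx]
    · exact hI c hcI
  funext e
  by_cases heU : e ∈ (restrict G (G.support \ {a, b})).edgeSet
  · simpa [heU] using congrFun hη e
  by_cases heE : e ∈ G.edgeSet
  · rw [hc.edgeSet_core] at heU
    obtain rfl | rfl : e = s(a, v) ∨ e = s(b, v) := by simpa [heE, or_iff_not_imp_left] using heU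
    exacts [hδa, hδb]
  · exact Function.notMem_support.mp fun h' => heE (hδ h')

end CherryTree

end CherryTree

theorem cherry_tight_edgeWeightLasso_iff_general {U : Type}
    (X : Set U) (G : SimpleGraph U)
    (hXfin : X.Finite) (hT : IsXTree X G)
    (a b v : U) (hch : IsProperCherry G a b v)
    (L : Set (Sym2 U)) (hL : IsCordSet X L) :
    (EdgeWeightLasso G L ∧ L.ncard = G.edgeSet.ncard) ↔
      (L.ncard = G.edgeSet.ncard ∧ s(a, b) ∈ L ∧
       EdgeWeightLasso (restrict G (G.support \ {a, b})) (cherryLU L a b v) ∧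
       (((cherryLU L a b v).ncard = (restrict G (G.support \ {a, b})).edgeSet.ncard) ∨
        ((cherryLU L a b v).ncard = (restrict G (G.support \ {a, b})).edgeSet.ncard + 1 ∧
         (cherryLU L a b v).ncard + 1 = L.ncard ∧
         ∀ ρ : Sym2 U → ℝ, ρ ≠ 0 →
           (∀ c, ρ c ≠ 0 → c ∈ cherryLU L a b v) →
           RhoAnnihilates (restrict G (G.support \ {a, b})) (cherryLU L a b v) ρ →
           (∑ᶠ y ∈ sideSet L a b, ρ (s(y, v))) ≠ 0))) := by
  obtain ⟨w, hc⟩ := hT.exists_cherryTree hch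
  have hLU := hL.finite_cherryLU (a := a) (b := b) hXfin hc.apex_notMem
  have hdisj :
      (sideSet L a b ∩ sideSet L b a).ncard = 0 → Disjoint (sideSet L a b) (sideSet L b a) :=
    fun hk => Set.disjoint_iff_inter_eq_empty.mpr
      ((Set.ncard_eq_zero ((hL.finite_sideSet hXfin).inter_of_left _)).mp hk)
  have hE := hc.ncard_edgeSet
  rw [edgeWeightLasso_iff_cordKerTrivial hc.edgeSet_finite,
    edgeWeightLasso_iff_cordKerTrivial hc.edgeSet_core_finite]
  constructor
  · rintro ⟨hker, hcard⟩
    have habL := hc.mk_mem_of_cordKerTrivial hL hker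
    have hkerU := hc.cordKerTrivial_core hL hker
    have hle := hkerU.ncard_edgeSet_le hc.edgeSet_core_finite hLU
    have hsplit := hL.ncard_eq_ncard_cherryLU_add hXfin hc.apex_notMem hc.left_ne_right habL
    refine ⟨hcard, habL, hkerU, ?_⟩
    obtain hk | hk : (sideSet L a b ∩ sideSet L b a).ncard = 0 ∨
        (sideSet L a b ∩ sideSet L b a).ncard = 1 := by omega
    · exact Or.inr ⟨by omega, by omega, fun ρ hρ hρL hann =>
        hc.finsum_sideSet_ne_zero hXfin hL hker hkerU (by omega) (hdisj hk) hρ hρL hann⟩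
    · exact Or.inl (by omega)
  · rintro ⟨hcard, habL, hkerU, hU3⟩
    have hsplit := hL.ncard_eq_ncard_cherryLU_add hXfin hc.apex_notMem hc.left_ne_right habL
    refine ⟨hc.cordKerTrivial_of_core hL habL hkerU fun δ _ hk => ?_, hcard⟩
    rcases hU3 with hU | ⟨hU, hLcard, hsum⟩
    · obtain ⟨x, hx⟩ := Set.nonempty_of_ncard_ne_zero
        (by omega : (sideSet L a b ∩ sideSet L b a).ncard ≠ 0)
      exact hc.edge_left_eq_zero_of_mem_inter hL habL hk hx
    · obtain ⟨ρ, hρ, hρL, hann⟩ := exists_rhoAnnihilates hc.edgeSet_core_finite hLU (by omega)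
      exact hc.edge_left_eq_zero_of_rhoAnnihilates hXfin hL habL (hdisj (by omega)) hann
        (hsum ρ hρ hρL hann) hk

/-- Theorem 5, second part: the characterization of tight edge-weight lassos
via the cherry reduction: `L` is a tight edge-weight lasso for `T` iff
`|L| = |E|`, (U1), (U2), and (U3-a') or (U3-b') holds. -/
theorem cherry_tight_edgeWeightLasso_iff {U : Type}
    (X : Set U) (G : SimpleGraph U)
    (hXfin : X.Finite) (hX3 : 3 ≤ X.ncard) (hT : IsXTree X G)
    (a b v : U) (hch : IsProperCherry G a b v)
    (L : Set (Sym2 U)) (hL : IsCordSet X L) :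
    (EdgeWeightLasso G L ∧ L.ncard = G.edgeSet.ncard) ↔
      (L.ncard = G.edgeSet.ncard ∧ s(a, b) ∈ L ∧
       EdgeWeightLasso (restrict G (G.support \ {a, b})) (cherryLU L a b v) ∧
       (((cherryLU L a b v).ncard = (restrict G (G.support \ {a, b})).edgeSet.ncard) ∨
        ((cherryLU L a b v).ncard = (restrict G (G.support \ {a, b})).edgeSet.ncard + 1 ∧
         (cherryLU L a b v).ncard + 1 = L.ncard ∧
         ∀ ρ : Sym2 U → ℝ, ρ ≠ 0 →
           (∀ c, ρ c ≠ 0 → c ∈ cherryLU L a b v) →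
           RhoAnnihilates (restrict G (G.support \ {a, b})) (cherryLU L a b v) ρ →
           (∑ᶠ y ∈ sideSet L a b, ρ (s(y, v))) ≠ 0))) :=
  cherry_tight_edgeWeightLasso_iff_general X G hXfin hT a b v hch L hL

end Lasso
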